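/- Let P be an adaptive ε_k-noisy sample of a compact set K with respect to a feature size function f, and let Q be the output of Declutter(P,k). Then every q ∈ Q satisfies d(q, q̄) ≤ 7 ε_k f(q̄), where q̄ is a nearest point of q in K. -/

import Mathlib

open Metric

/-- Core loop of the Declutter algorithm: scan the (pre-sorted) list, keeping a point `p`
iff no previously kept point lies in the open ball `B(p, 2 f p)` (w.r.t. distance `d`). -/
noncomputable def declutterAux {X : Type*} (d : X → X → ℝ) (f : X → ℝ) :
    List X → List X → List X
  | Q, [] => Q
  | Q, p :: rest =>
    if ∀ q ∈ Q, 2 * f p ≤ d p q then declutterAux d f (Q ++ [p]) rest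
    else declutterAux d f Q rest

noncomputable def declutter {X : Type*} (d : X → X → ℝ) (f : X → ℝ) (L : List X) : List X :=
  declutterAux d f [] L

/-- `Q` is a possible output of the Declutter algorithm on `P`, with robust distance
function `f`: the points of `P` are processed in nondecreasing order of `f`
(ties broken arbitrarily). -/
def IsDeclutterOutput {X : Type*} (d : X → X → ℝ) (f : X → ℝ) (P : Finset X)
    (Q : List X) : Prop :=
  ∃ L : List X, L.Perm P.toList ∧ L.Pairwise (fun a b => f a ≤ f b) ∧ Q = declutter d f L

variable {X : Type*} [MetricSpace X]

/-- Sorted (nondecreasing) list of distances from `x` to the points of `P`. -/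
noncomputable def sortedDists (P : Finset X) (x : X) : List ℝ :=
  (P.val.map (dist x)).sort (· ≤ ·)

/-- The k-distance: root mean square of the distances to the k nearest neighbors in `P`. -/
noncomputable def kdist (P : Finset X) (k : ℕ) (x : X) : ℝ :=
  Real.sqrt ((1 / (k : ℝ)) * (((sortedDists P x).take k).map (fun r => r ^ 2)).sum)

/-- `P` is an ε_k-noisy sample of `K`:
(1) the k-distance is at most ε on `K`; (2) every point of the space is within
`kdist + ε` of `K`. -/
def NoisySample (P : Finset X) (k : ℕ) (K : Set X) (ε : ℝ) : Prop :=
  (∀ x ∈ K, kdist P k x ≤ ε) ∧ ∀ x : X, infDist x K ≤ kdist P k x + ε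

/-- `P` is an adaptive ε_k-noisy sample of `K` with respect to the feature size `f`. -/
def AdaptiveNoisySample (P : Finset X) (k : ℕ) (K : Set X) (f : X → ℝ) (ε : ℝ) : Prop :=
  (∀ x ∈ K, kdist P k x ≤ ε * f x) ∧
    ∀ y : X, ∀ ybar ∈ K, (∀ z ∈ K, dist y ybar ≤ dist y z) →
      infDist y K ≤ kdist P k y + ε * f ybar

/-!
Write `c = ε f(q̄)`. Some sample point `p` lies within `d_{P,k}(q̄) ≤ c` of `q̄`, and since the
`k`-distance is `1`-Lipschitz, `d_{P,k}(p) ≤ 2c`. Declutter keeps a point `w` with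
`d(p, w) ≤ 2 d_{P,k}(p) ≤ 4c`. If `q = w` we are done; otherwise `q` and `w` were both kept, so
`2 d_{P,k}(q) ≤ d(q, w) ≤ d(q, q̄) + 5c`, and together with the sampling condition
`d(q, q̄) ≤ d_{P,k}(q) + c` this gives `d(q, q̄) ≤ 7c`.
-/

section Declutter

variable {Y : Type*} (d : Y → Y → ℝ) (f : Y → ℝ)

lemma exists_declutterAux_eq_append (L Q : List Y) :
    ∃ R, declutterAux d f Q L = Q ++ R ∧ R.Sublist L := by
  induction L generalizing Q with
  | nil => exact ⟨[], by simp [declutterAux], List.Sublist.refl _⟩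
  | cons p rest ih =>
    rw [declutterAux]
    split_ifs
    · obtain ⟨R, hR, hsub⟩ := ih (Q ++ [p])
      exact ⟨p :: R, by simp [hR], hsub.cons_cons p⟩
    · obtain ⟨R, hR, hsub⟩ := ih Q
      exact ⟨R, hR, hsub.cons p⟩

lemma declutter_sublist (L : List Y) : (declutter d f L).Sublist L := by
  obtain ⟨R, hR, hsub⟩ := exists_declutterAux_eq_append d f L []
  simpa [declutter, hR] using hsub

lemma pairwise_declutterAux (L Q : List Y) (hQ : Q.Pairwise fun a b => 2 * f b ≤ d b a) :
    (declutterAux d f Q L).Pairwise fun a b => 2 * f b ≤ d b a := by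
  induction L generalizing Q with
  | nil => simpa [declutterAux] using hQ
  | cons p rest ih =>
    rw [declutterAux]
    split_ifs with hp
    · exact ih _ (List.pairwise_append.2 ⟨hQ, List.pairwise_singleton _ _,
        fun a ha b hb => List.mem_singleton.1 hb ▸ hp a ha⟩)
    · exact ih Q hQ

/-- Kept points are pairwise separated at the scale of the earlier-processed one, hence, when
`L` is sorted by `f`, at the scale of either. -/
lemma declutter_separated (hd : ∀ a b, d a b = d b a) {L : List Y}
    (hL : L.Pairwise fun a b => f a ≤ f b) :
    ∀ q ∈ declutter d f L, ∀ w ∈ declutter d f L, q ≠ w → 2 * f q ≤ d q w := by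
  have hsep : (declutter d f L).Pairwise fun a b => 2 * f b ≤ d b a :=
    pairwise_declutterAux d f L [] List.Pairwise.nil
  have hsorted := hL.sublist (declutter_sublist d f L)
  let S : Y → Y → Prop := fun a b => 2 * f a ≤ d a b ∧ 2 * f b ≤ d b a
  have : Std.Symm S := ⟨fun _ _ h => h.symm⟩
  have hS : (declutter d f L).Pairwise S := (hsep.and hsorted).imp fun {a b} ⟨hab, hf⟩ =>
    ⟨by linarith [hd a b], hab⟩
  exact fun q hq w hw hqw => (hS.forall hq hw hqw).1

lemma exists_mem_declutterAux_le (hf : ∀ x, 0 ≤ f x) (hd : ∀ x, d x x = 0)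
    (L Q : List Y) {x : Y} (hx : x ∈ L) : ∃ w ∈ declutterAux d f Q L, d x w ≤ 2 * f x := by
  induction L generalizing Q with
  | nil => cases hx
  | cons p rest ih =>
    rw [declutterAux]
    split_ifs with hp
    · rcases List.mem_cons.1 hx with rfl | hx
      · obtain ⟨R, hR, -⟩ := exists_declutterAux_eq_append d f rest (Q ++ [x])
        exact ⟨x, by simp [hR], by linarith [hd x, hf x]⟩
      · exact ih _ hx
    · rcases List.mem_cons.1 hx with rfl | hx
      · obtain ⟨w, hw, hlt⟩ := not_forall₂.1 hp
        obtain ⟨R, hR, -⟩ := exists_declutterAux_eq_append d f rest Q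
        exact ⟨w, by simp [hR, hw], (not_le.1 hlt).le⟩
      · exact ih Q hx

lemma exists_mem_declutter_le (hf : ∀ x, 0 ≤ f x) (hd : ∀ x, d x x = 0)
    {L : List Y} {x : Y} (hx : x ∈ L) : ∃ w ∈ declutter d f L, d x w ≤ 2 * f x :=
  exists_mem_declutterAux_le d f hf hd L [] hx

end Declutter

/-- In a sorted list the elements `≤ y` form a prefix. -/
lemma List.Pairwise.getElem_le_iff_lt_countP {α : Type*} [LinearOrder α] {l : List α}
    (hl : l.Pairwise (· ≤ ·)) {i : ℕ} (hi : i < l.length) {y : α} :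
    l[i] ≤ y ↔ i < l.countP (· ≤ y) := by
  constructor
  · intro hiy
    have htake : (l.take (i + 1)).countP (· ≤ y) = i + 1 := by
      rw [List.countP_eq_length.2, List.length_take]
      · omega
      intro a ha
      obtain ⟨j, hj, rfl⟩ := List.mem_take_iff_getElem.1 ha
      exact decide_eq_true <|
        (hl.rel_get_of_le (a := ⟨j, by omega⟩) (b := ⟨i, hi⟩) (by simp; omega)).trans hiy
    have := (List.take_sublist (i + 1) l).countP_le (p := (· ≤ y))
    omega
  · intro hcount
    by_contra! hyi
    have hdrop : (l.drop i).countP (· ≤ y) = 0 := by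
      refine List.countP_eq_zero.2 fun a ha => ?_
      obtain ⟨j, hj, rfl⟩ := List.mem_drop_iff_getElem.1 ha
      have := hl.rel_get_of_le (a := ⟨i, hi⟩) (b := ⟨i + j, by omega⟩) (by simp)
      simpa using hyi.trans_le this
    have := List.take_append_drop i l ▸ List.countP_append (l₁ := l.take i) (l₂ := l.drop i)
      (p := (· ≤ y))
    have := (List.countP_le_length (p := (· ≤ y)) (l := l.take i)).trans
      (List.length_take_le i l)
    omega

lemma Multiset.getElem_sort_map_le_add {ι : Type*} (m : Multiset ι) {F G : ι → ℝ} {c : ℝ}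
    (h : ∀ a, F a ≤ G a + c) {i : ℕ} (hF : i < ((m.map F).sort (· ≤ ·)).length)
    (hG : i < ((m.map G).sort (· ≤ ·)).length) :
    ((m.map F).sort (· ≤ ·))[i] ≤ ((m.map G).sort (· ≤ ·))[i] + c := by
  have hcount (H : ι → ℝ) (z : ℝ) :
      ((m.map H).sort (· ≤ ·)).countP (· ≤ z) = (m.filter fun a => H a ≤ z).card := by
    rw [← Multiset.coe_countP, Multiset.sort_eq, Multiset.countP_map]
  set y := ((m.map G).sort (· ≤ ·))[i]
  rw [(Multiset.pairwise_sort _ _).getElem_le_iff_lt_countP, hcount]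
  have hy := ((Multiset.pairwise_sort _ _).getElem_le_iff_lt_countP hG).1 le_rfl
  rw [hcount] at hy
  exact hy.trans_le <| Multiset.card_le_card <|
    Multiset.monotone_filter_right m fun a ha => (h a).trans (by linarith)

lemma List.sum_map_take_eq_sum_range_getD {α M : Type*} [AddCommMonoid M] (l : List α) (a : α)
    (g : α → M) (hg : g a = 0) (k : ℕ) :
    ((l.take k).map g).sum = ∑ i ∈ Finset.range k, g (l.getD i a) := by
  induction l generalizing k with
  | nil => simp [hg]
  | cons b t ih =>
    cases k with
    | zero => simp
    | succ k =>
      rw [Finset.sum_range_succ', List.take_succ_cons, List.map_cons, List.sum_cons, ih]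
      simp [add_comm]

/-- A consequence of Minkowski's inequality. -/
lemma sqrt_mean_sq_le_add {ι : Type*} (s : Finset ι) {u v : ι → ℝ} {c : ℝ}
    (hu : ∀ i ∈ s, 0 ≤ u i) (hc : 0 ≤ c) (huv : ∀ i ∈ s, u i ≤ v i + c) :
    √((1 / s.card) * ∑ i ∈ s, u i ^ 2) ≤ √((1 / s.card) * ∑ i ∈ s, v i ^ 2) + c := by
  have hsq : ∑ i ∈ s, u i ^ 2 ≤ ∑ i ∈ s, (v i + c) ^ 2 :=
    Finset.sum_le_sum fun i hi => pow_le_pow_left₀ (hu i hi) (huv i hi) 2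
  have hmink : √(∑ i ∈ s, (v i + c) ^ 2) ≤ √(∑ i ∈ s, v i ^ 2) + √(s.card * c ^ 2) := by
    have := Real.Lp_add_le s v (fun _ => c) (p := 2) one_le_two
    simpa only [Real.rpow_two, sq_abs, ← Real.sqrt_eq_rpow, Finset.sum_const,
      nsmul_eq_mul] using this
  have hn : √(1 / s.card) * √(s.card * c ^ 2) ≤ c := by
    rw [← Real.sqrt_mul (by positivity), ← mul_assoc]
    calc √(1 / s.card * s.card * c ^ 2) ≤ √(c ^ 2) := by
          gcongr
          exact mul_le_of_le_one_left (sq_nonneg c)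
            (by rw [one_div_mul_eq_div]; exact div_self_le_one _)
      _ = c := Real.sqrt_sq hc
  calc √((1 / s.card) * ∑ i ∈ s, u i ^ 2)
      ≤ √(1 / s.card) * (√(∑ i ∈ s, v i ^ 2) + √(s.card * c ^ 2)) := by
        rw [Real.sqrt_mul (by positivity)]
        gcongr
        exact (Real.sqrt_le_sqrt hsq).trans hmink
    _ ≤ √((1 / s.card) * ∑ i ∈ s, v i ^ 2) + c := by
        rw [mul_add, ← Real.sqrt_mul (by positivity)]
        gcongr

lemma length_sortedDists (P : Finset X) (x : X) : (sortedDists P x).length = P.card := by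
  simp [sortedDists]

lemma exists_mem_dist_eq_of_mem_sortedDists {P : Finset X} {x : X} {r : ℝ}
    (hr : r ∈ sortedDists P x) : ∃ p ∈ P, dist x p = r :=
  Multiset.mem_map.1 ((Multiset.mem_sort _).1 hr)

lemma getD_sortedDists_nonneg (P : Finset X) (x : X) (i : ℕ) :
    0 ≤ (sortedDists P x).getD i 0 := by
  by_cases hi : i < (sortedDists P x).length
  · obtain ⟨p, -, hp⟩ := exists_mem_dist_eq_of_mem_sortedDists (List.getElem_mem hi)
    rw [List.getD_eq_getElem _ _ hi, ← hp]
    exact dist_nonneg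
  · rw [List.getD_eq_default _ _ (not_lt.1 hi)]

lemma getD_sortedDists_le_add_dist (P : Finset X) (x y : X) (i : ℕ) :
    (sortedDists P x).getD i 0 ≤ (sortedDists P y).getD i 0 + dist x y := by
  by_cases hi : i < P.card
  · rw [List.getD_eq_getElem _ _ (by rwa [length_sortedDists]),
      List.getD_eq_getElem _ _ (by rwa [length_sortedDists])]
    exact Multiset.getElem_sort_map_le_add P.val (F := dist x) (G := dist y)
      (fun p => by linarith [dist_triangle x y p]) _ _
  · rw [List.getD_eq_default _ _ (by rw [length_sortedDists]; omega),
      List.getD_eq_default _ _ (by rw [length_sortedDists]; omega), zero_add]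
    exact dist_nonneg

lemma kdist_nonneg (P : Finset X) (k : ℕ) (x : X) : 0 ≤ kdist P k x :=
  Real.sqrt_nonneg _

lemma kdist_eq_sqrt_sum (P : Finset X) (k : ℕ) (x : X) :
    kdist P k x = √((1 / k) * ∑ i ∈ Finset.range k, (sortedDists P x).getD i 0 ^ 2) := by
  rw [kdist, List.sum_map_take_eq_sum_range_getD _ 0 _ (zero_pow two_ne_zero)]

lemma kdist_le_kdist_add_dist (P : Finset X) (k : ℕ) (x y : X) :
    kdist P k x ≤ kdist P k y + dist x y := by
  simpa only [kdist_eq_sqrt_sum, Finset.card_range] using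
    sqrt_mean_sq_le_add (Finset.range k) (fun i _ => getD_sortedDists_nonneg P x i)
      dist_nonneg (fun i _ => getD_sortedDists_le_add_dist P x y i)

lemma exists_dist_le_kdist (P : Finset X) {k : ℕ} (hk : 1 ≤ k) (hkP : k ≤ P.card) (x : X) :
    ∃ p ∈ P, dist x p ≤ kdist P k x := by
  have h0 : 0 < (sortedDists P x).length := by rw [length_sortedDists]; omega
  obtain ⟨p, hp, hpx⟩ := exists_mem_dist_eq_of_mem_sortedDists (List.getElem_mem h0)
  refine ⟨p, hp, ?_⟩
  have hmin : ∀ i ∈ Finset.range k, dist x p ≤ (sortedDists P x).getD i 0 + 0 := by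
    intro i hi
    have hik := Finset.mem_range.1 hi
    rw [add_zero, List.getD_eq_getElem _ _ (by rw [length_sortedDists]; omega), hpx]
    exact (Multiset.pairwise_sort _ _).rel_get_of_le (Fin.mk_le_mk.2 (Nat.zero_le i))
  have hk0 : (k : ℝ) ≠ 0 := by positivity
  simpa [kdist_eq_sqrt_sum, Finset.card_range, hk0, Real.sqrt_sq dist_nonneg] using
    sqrt_mean_sq_le_add (Finset.range k) (fun _ _ => dist_nonneg) le_rfl hmin

lemma AdaptiveNoisySample.dist_le_kdist_add {P : Finset X} {k : ℕ} {K : Set X} {f : X → ℝ}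
    {ε : ℝ} (hP : AdaptiveNoisySample P k K f ε) {y ybar : X} (hybar : ybar ∈ K)
    (hnear : ∀ z ∈ K, dist y ybar ≤ dist y z) : dist y ybar ≤ kdist P k y + ε * f ybar :=
  ((le_infDist ⟨ybar, hybar⟩).2 hnear).trans (hP.2 y ybar hybar hnear)

theorem declutter_no_outliers_adaptive_general (P : Finset X) (k : ℕ) (hk : 1 ≤ k)
    (hkP : k ≤ P.card) (K : Set X) (f : X → ℝ)
    (ε : ℝ) (hsample : AdaptiveNoisySample P k K f ε)
    (Q : List X) (hQ : IsDeclutterOutput (fun a b => dist a b) (kdist P k) P Q) :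
    ∀ q ∈ Q, ∀ qbar ∈ K, (∀ z ∈ K, dist q qbar ≤ dist q z) →
      dist q qbar ≤ 7 * ε * f qbar := by
  obtain ⟨L, hperm, hsorted, rfl⟩ := hQ
  intro q hq qbar hqbar hnear
  have hqK := hsample.dist_le_kdist_add hqbar hnear
  have hkqbar := hsample.1 qbar hqbar
  obtain ⟨p, hpP, hqbarp⟩ := exists_dist_le_kdist P hk hkP qbar
  have hkp : kdist P k p ≤ 2 * (ε * f qbar) := by
    linarith [kdist_le_kdist_add_dist P k p qbar, dist_comm p qbar]
  obtain ⟨w, hw, hpw⟩ := exists_mem_declutter_le (fun a b => dist a b) (kdist P k)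
    (kdist_nonneg P k) dist_self (hperm.mem_iff.2 (Finset.mem_toList.2 hpP))
  rcases eq_or_ne q w with rfl | hqw
  · linarith [dist_triangle q p qbar, dist_comm q p, dist_comm p qbar,
      dist_nonneg (x := qbar) (y := p)]
  · have hsep := declutter_separated _ _ dist_comm hsorted q hq w hw hqw
    linarith [dist_triangle4 q qbar p w]

/-- Adaptive case: every kept point `q` is within `7 ε f(q̄)` of its nearest point `q̄`
in `K`. -/
theorem declutter_no_outliers_adaptive (P : Finset X) (k : ℕ) (hk : 1 ≤ k)
    (hkP : k ≤ P.card) (K : Set X) (hK : IsCompact K) (hKne : K.Nonempty)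
    (f : X → ℝ) (hfpos : ∀ x ∈ K, 0 < f x)
    (hflip : ∀ x ∈ K, ∀ y ∈ K, |f x - f y| ≤ dist x y)
    (ε : ℝ) (hsample : AdaptiveNoisySample P k K f ε)
    (Q : List X) (hQ : IsDeclutterOutput (fun a b => dist a b) (kdist P k) P Q) :
    ∀ q ∈ Q, ∀ qbar ∈ K, (∀ z ∈ K, dist q qbar ≤ dist q z) →
      dist q qbar ≤ 7 * ε * f qbar :=
  declutter_no_outliers_adaptive_general P k hk hkP K f ε hsample Q hQ
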